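/- Consider the BPP description with variables {X, Y, Y', Z}, actions {τ, a, b} and rules Y →τ X, Y →τ Z, Y →τ Y', Y' →a ε, Y' →b ε, X →a X, Z →b Z. Then X ≈_1 Y and Y ≈_1 Z but X ≉_1 Z; in particular the short-long approximant ≈_1 is not a transitive relation. -/

import Mathlib

/-- A Basic Parallel Processes description: finitely many variables, finitely many
actions (with a distinguished silent action `tau`) and finitely many rules. -/
structure BPP where
  V : Type
  Act : Type
  finV : Finite V
  finAct : Finite Act
  tau : Act
  T : Set (V × Act × Multiset V)
  finT : T.Finite

namespace BPP

variable (B : BPP)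

/-- Processes are multisets of variables. -/
abbrev Proc (B : BPP) : Type := Multiset B.V

/-- The strong step relation `α →a β`. -/
def Step (a : B.Act) (α β : B.Proc) : Prop :=
  ∃ X γ δ, (X, a, γ) ∈ B.T ∧ α = X ::ₘ δ ∧ β = γ + δ

/-- `α ⇒τ β`: the reflexive–transitive closure of silent steps. -/
def WTau : B.Proc → B.Proc → Prop :=
  Relation.ReflTransGen (B.Step B.tau)

/-- The weak step relation `α ⇒a β`. -/
def WStep (a : B.Act) (α β : B.Proc) : Prop :=
  (a = B.tau ∧ B.WTau α β) ∨
  (a ≠ B.tau ∧ ∃ γ δ, B.WTau α γ ∧ B.Step a γ δ ∧ B.WTau δ β)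

/-- Weak steps along a word `w ∈ Act*`. -/
def WWord : List B.Act → B.Proc → B.Proc → Prop
  | [] => B.WTau
  | a :: w => fun α β => ∃ γ, B.WStep a α γ ∧ WWord w γ β

/-- A weak bisimulation. -/
def IsWeakBisim (R : B.Proc → B.Proc → Prop) : Prop :=
  Symmetric R ∧
    ∀ α β, R α β → ∀ a α', B.Step a α α' → ∃ β', B.WStep a β β' ∧ R α' β'

/-- Weak bisimilarity `α ≈ β`. -/
def WBisim (α β : B.Proc) : Prop :=
  ∃ R, B.IsWeakBisim R ∧ R α β

/-- Refinement function for the short-long approximants: `Ψ(R)` is the largest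
symmetric relation such that every strong attack is answered by a weak step into `R`. -/
def RefSL (R : B.Proc → B.Proc → Prop) (α β : B.Proc) : Prop :=
  (∀ a α', B.Step a α α' → ∃ β', B.WStep a β β' ∧ R α' β') ∧
  (∀ a β', B.Step a β β' → ∃ α', B.WStep a α α' ∧ R α' β')

/-- Refinement function for the long-long approximants: weak attacks, weak responses. -/
def RefLL (R : B.Proc → B.Proc → Prop) (α β : B.Proc) : Prop :=
  (∀ a α', B.WStep a α α' → ∃ β', B.WStep a β β' ∧ R α' β') ∧
  (∀ a β', B.WStep a β β' → ∃ α', B.WStep a α α' ∧ R α' β')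

/-- Refinement function for the word approximants: attacks along words, responses
along the same word. -/
def RefW (R : B.Proc → B.Proc → Prop) (α β : B.Proc) : Prop :=
  (∀ w α', B.WWord w α α' → ∃ β', B.WWord w β β' ∧ R α' β') ∧
  (∀ w β', B.WWord w β β' → ∃ α', B.WWord w α α' ∧ R α' β')

/-- Refinement function for the Parikh approximants: attacks along words, responses
along any word with the same Parikh image (multiset of letters). -/
def RefP (R : B.Proc → B.Proc → Prop) (α β : B.Proc) : Prop :=
  (∀ w α', B.WWord w α α' →
    ∃ (w' : List B.Act) (β' : B.Proc), (↑w' : Multiset B.Act) = ↑w ∧ B.WWord w' β β' ∧ R α' β') ∧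
  (∀ w β', B.WWord w β β' →
    ∃ (w' : List B.Act) (α' : B.Proc), (↑w' : Multiset B.Act) = ↑w ∧ B.WWord w' α α' ∧ R α' β')

/-- Approximants by transfinite recursion: `≈₀` is the full relation,
`≈_{i+1} = Ψ(≈_i)` and `≈_λ = ⋂_{i<λ} ≈_i` at limit ordinals. -/
noncomputable def Approx (F : (B.Proc → B.Proc → Prop) → (B.Proc → B.Proc → Prop))
    (o : Ordinal) : B.Proc → B.Proc → Prop :=
  Ordinal.limitRecOn o (fun _ _ => True) (fun _ R => F R)
    (fun _ _ ih α β => ∀ i hi, ih i hi α β)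

/-- A deadlock: no visible step is possible. -/
def Deadlock (α : B.Proc) : Prop :=
  ∀ a α', B.Step a α α' → a = B.tau

/-- The norm of a process: least length of a word leading weakly to a deadlock
(`⊤ = ∞` if there is none). -/
noncomputable def norm (α : B.Proc) : ℕ∞ :=
  sInf {n : ℕ∞ | ∃ w δ, B.WWord w α δ ∧ B.Deadlock δ ∧ (w.length : ℕ∞) = n}

/-- A normed description: every variable has finite norm. -/
def Normed : Prop := ∀ X : B.V, B.norm {X} ≠ ⊤

/-- Silent norm-preserving steps `α →₀ β`. -/
def Step0 (α β : B.Proc) : Prop :=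
  B.Step B.tau α β ∧ B.norm α = B.norm β

/-- `⇒₀`: reflexive–transitive closure of silent norm-preserving steps. -/
def WTau0 : B.Proc → B.Proc → Prop :=
  Relation.ReflTransGen B.Step0

/-- No two distinct variables are redundant. -/
def NoRedundantVars : Prop :=
  ∀ X Y : B.V, X ≠ Y → ¬ (B.WTau0 {X} {Y} ∧ B.WTau0 {Y} {X})

/-- A generator: a variable that can silently, norm-preservingly reproduce itself
together with some nonempty rest. -/
def IsGenerator (X : B.V) : Prop :=
  ∃ α : B.Proc, α ≠ 0 ∧ B.WTau0 {X} ({X} + α)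

/-- A pure variable cannot vanish along `⇒₀`. -/
def IsPure (X : B.V) : Prop :=
  ∀ α : B.Proc, B.WTau0 {X} α → X ∈ α

end BPP


inductive V14 : Type
  | X | Y | Y' | Z
deriving DecidableEq

instance : Fintype V14 :=
  ⟨{V14.X, V14.Y, V14.Y', V14.Z}, fun x => by cases x <;> first | decide | simp⟩

inductive A14 : Type
  | tau | a | b
deriving DecidableEq

instance : Fintype A14 :=
  ⟨{A14.tau, A14.a, A14.b}, fun x => by cases x <;> first | decide | simp⟩

/-- Rules: Y →τ X, Y →τ Z, Y →τ Y', Y' →a ε, Y' →b ε, X →a X, Z →b Z. -/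
def rules14 : List (V14 × A14 × Multiset V14) :=
  [(V14.Y, A14.tau, {V14.X}), (V14.Y, A14.tau, {V14.Z}), (V14.Y, A14.tau, {V14.Y'}),
   (V14.Y', A14.a, 0), (V14.Y', A14.b, 0),
   (V14.X, A14.a, {V14.X}), (V14.Z, A14.b, {V14.Z})]

def B14 : BPP :=
  { V := V14, Act := A14, finV := inferInstance, finAct := inferInstance,
    tau := A14.tau, T := {r | r ∈ rules14}, finT := rules14.finite_toSet }

lemma approx_one : B14.Approx B14.RefSL 1 = B14.RefSL (fun _ _ => True) := by
  have h1 : (1 : Ordinal) = Order.succ 0 := by simp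
  rw [BPP.Approx, h1, Ordinal.limitRecOn_succ, Ordinal.limitRecOn_zero]

lemma step_sing {W : V14} {a : A14} {β : Multiset V14}
    (h : B14.Step a {W} β) : (W, a, β) ∈ rules14 := by
  obtain ⟨v, γ, δ, hT, hα, hβ⟩ := h
  replace hα := (Multiset.singleton_eq_cons_iff (α := V14) δ).1 hα
  obtain ⟨rfl, rfl⟩ := hα
  subst hβ
  show (W, a, (γ : Multiset V14) + 0) ∈ rules14
  exact (congrArg (fun g : Multiset V14 => (W, a, g) ∈ rules14) (add_zero γ)).mpr hT

lemma step_rule {W : V14} {a : A14} {β : Multiset V14}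
    (h : (W, a, β) ∈ rules14) : B14.Step a ({W} : Multiset V14) β :=
  ⟨W, β, 0, h, rfl, (add_zero β).symm⟩

lemma wtau_X {γ : Multiset V14} (h : B14.WTau {V14.X} γ) : γ = {V14.X} := by
  rcases (Relation.ReflTransGen.cases_head h) with rfl | ⟨β, hs, _⟩
  · rfl
  · have := step_sing hs
    simp [rules14, B14, Prod.ext_iff] at this

lemma wtau_Z {γ : Multiset V14} (h : B14.WTau {V14.Z} γ) : γ = {V14.Z} := by
  rcases (Relation.ReflTransGen.cases_head h) with rfl | ⟨β, hs, _⟩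
  · rfl
  · have := step_sing hs
    simp [rules14, B14, Prod.ext_iff] at this

/-- weak visible step via Y': Y ⇒a ε and Y ⇒b ε -/
lemma y_wstep (c : A14) (hc : c = A14.a ∨ c = A14.b) :
    B14.WStep c {V14.Y} (0 : Multiset V14) := by
  right
  constructor
  · rcases hc with rfl | rfl <;> simp [B14]
  · refine ⟨{V14.Y'}, 0, ?_, ?_, Relation.ReflTransGen.refl⟩
    · exact Relation.ReflTransGen.single (step_rule (W := V14.Y) (a := A14.tau) (β := {V14.Y'}) (by simp [rules14, B14]))
    · rcases hc with rfl | rfl <;> exact step_rule (β := 0) (by simp [rules14])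

lemma wstep_tau_refl (α : Multiset V14) : B14.WStep A14.tau α α :=
  Or.inl ⟨rfl, Relation.ReflTransGen.refl⟩

/-- `X ≈₁ Y` and `Y ≈₁ Z` but `X ≉₁ Z`; in particular the
short-long approximant `≈₁` is not transitive. -/
theorem sl_approximant_not_transitive :
    B14.Approx B14.RefSL 1 ({V14.X} : Multiset V14) ({V14.Y} : Multiset V14) ∧
    B14.Approx B14.RefSL 1 ({V14.Y} : Multiset V14) ({V14.Z} : Multiset V14) ∧
    ¬ B14.Approx B14.RefSL 1 ({V14.X} : Multiset V14) ({V14.Z} : Multiset V14) ∧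
    ¬ Transitive (B14.Approx B14.RefSL 1) := by
  simp only [approx_one]
  have hXY : B14.RefSL (fun _ _ => True) ({V14.X} : Multiset V14) ({V14.Y} : Multiset V14) := by
    constructor
    · intro a α' h
      have h' := step_sing h
      simp [rules14] at h'
      obtain ⟨rfl, rfl⟩ := h'
      exact ⟨0, y_wstep _ (Or.inl rfl), trivial⟩
    · intro a β' h
      have h' := step_sing h
      simp [rules14, Prod.ext_iff] at h'
      have : a = A14.tau := by tauto
      subst this
      exact ⟨{V14.X}, wstep_tau_refl _, trivial⟩
  have hYZ : B14.RefSL (fun _ _ => True) ({V14.Y} : Multiset V14) ({V14.Z} : Multiset V14) := by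
    constructor
    · intro a α' h
      have h' := step_sing h
      simp [rules14, Prod.ext_iff] at h'
      have : a = A14.tau := by tauto
      subst this
      exact ⟨{V14.Z}, wstep_tau_refl _, trivial⟩
    · intro a β' h
      have h' := step_sing h
      simp [rules14] at h'
      obtain ⟨rfl, rfl⟩ := h'
      exact ⟨0, y_wstep _ (Or.inr rfl), trivial⟩
  have hXZ : ¬ B14.RefSL (fun _ _ => True) ({V14.X} : Multiset V14) ({V14.Z} : Multiset V14) := by
    intro h
    obtain ⟨β', hw, -⟩ := h.1 A14.a {V14.X} (step_rule (β := {V14.X}) (by simp [rules14]))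
    rcases hw with ⟨h1, -⟩ | ⟨-, γ, δ, hγ, hs, -⟩
    · exact absurd h1 (by simp [B14])
    · rw [wtau_Z hγ] at hs
      have := step_sing hs
      simp [rules14, Prod.ext_iff] at this
  refine ⟨hXY, hYZ, hXZ, fun ht => hXZ (ht hXY hYZ)⟩
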